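/- arXiv:math/0610148 — 6 statements merged into one kernel-verified Lean document; each statement's English description precedes it below -/
import Mathlib

section
/- Let d ≥ 1, let 0 < κ < 1, and let X : ℝ² → ℝ^d be a C² function satisfying the linear wave equation ∂ₜₜX = κ²∂ₛₛX on all of ℝ² together with the constraint |∂ₜX(t,s) + κ∂ₛX(t,s)|² = 1 − κ² and |∂ₜX(t,s) − κ∂ₛX(t,s)|² = 1 − κ² for every (t,s) ∈ ℝ². Then X satisfies the relativistic string equation ∂ₜ(B∂ₜX − C∂ₛX) − ∂ₛ(C∂ₜX + D∂ₛX) = 0 on ℝ². -/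
open scoped RealInnerProductSpace

/-- Partial derivative in the first variable `t` of a map on `ℝ × ℝ`. -/
noncomputable def pt {F : Type*} [NormedAddCommGroup F] [NormedSpace ℝ F]
    (X : ℝ × ℝ → F) (p : ℝ × ℝ) : F := deriv (fun t => X (t, p.2)) p.1

/-- Partial derivative in the second variable `s` of a map on `ℝ × ℝ`. -/
noncomputable def ps {F : Type*} [NormedAddCommGroup F] [NormedSpace ℝ F]
    (X : ℝ × ℝ → F) (p : ℝ × ℝ) : F := deriv (fun s => X (p.1, s)) p.2

noncomputable def strA {d : ℕ} (X : ℝ × ℝ → EuclideanSpace ℝ (Fin d)) (p : ℝ × ℝ) : ℝ :=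
  Real.sqrt ((1 + ‖ps X p‖ ^ 2) * (1 - ‖pt X p‖ ^ 2) + ⟪pt X p, ps X p⟫ ^ 2)

noncomputable def strB {d : ℕ} (X : ℝ × ℝ → EuclideanSpace ℝ (Fin d)) (p : ℝ × ℝ) : ℝ :=
  (1 + ‖ps X p‖ ^ 2) / strA X p

noncomputable def strC {d : ℕ} (X : ℝ × ℝ → EuclideanSpace ℝ (Fin d)) (p : ℝ × ℝ) : ℝ :=
  ⟪pt X p, ps X p⟫ / strA X p

noncomputable def strD {d : ℕ} (X : ℝ × ℝ → EuclideanSpace ℝ (Fin d)) (p : ℝ × ℝ) : ℝ :=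
  (1 - ‖pt X p‖ ^ 2) / strA X p

/-!
Polarizing the two constraints gives `⟪∂ₜX, ∂ₛX⟫ = 0` and `1 - |∂ₜX|² = κ²(1 + |∂ₛX|²)`, so
`A = κ(1 + |∂ₛX|²)`, `B = κ⁻¹`, `C = 0` and `D = κ` everywhere. The string equation then becomes
`κ⁻¹ (∂ₜₜX - κ² ∂ₛₛX) = 0`, which is the wave equation.
-/

section PartialDeriv

variable {F : Type*} [NormedAddCommGroup F] [NormedSpace ℝ F]

lemma pt_const_smul (c : ℝ) (X : ℝ × ℝ → F) (p : ℝ × ℝ) :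
    pt (fun q => c • X q) p = c • pt X p :=
  deriv_fun_const_smul_field c _

lemma ps_const_smul (c : ℝ) (X : ℝ × ℝ → F) (p : ℝ × ℝ) :
    ps (fun q => c • X q) p = c • ps X p :=
  deriv_fun_const_smul_field c _

end PartialDeriv

section Polarization

variable {E : Type*} [NormedAddCommGroup E] [InnerProductSpace ℝ E]

lemma real_inner_eq_zero_of_norm_add_smul_sq_eq_norm_sub_smul_sq {x y : E} {κ : ℝ} (hκ : κ ≠ 0)
    (h : ‖x + κ • y‖ ^ 2 = ‖x - κ • y‖ ^ 2) : ⟪x, y⟫ = 0 := by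
  rw [norm_add_sq_real, norm_sub_sq_real, real_inner_smul_right] at h
  have : 4 * κ * ⟪x, y⟫ = 0 := by linarith
  simpa [hκ] using this

lemma norm_add_smul_sq_of_real_inner_eq_zero {x y : E} (κ : ℝ) (h : ⟪x, y⟫ = 0) :
    ‖x + κ • y‖ ^ 2 = ‖x‖ ^ 2 + κ ^ 2 * ‖y‖ ^ 2 := by
  rw [norm_add_sq_real, real_inner_smul_right, h, norm_smul, mul_pow, Real.norm_eq_abs, sq_abs]
  ring

end Polarization

section StringCoefficients

variable {d : ℕ} {X : ℝ × ℝ → EuclideanSpace ℝ (Fin d)} {p : ℝ × ℝ} {κ : ℝ}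

lemma strA_eq (hκ : 0 ≤ κ) (horth : ⟪pt X p, ps X p⟫ = 0)
    (hnorm : 1 - ‖pt X p‖ ^ 2 = κ ^ 2 * (1 + ‖ps X p‖ ^ 2)) :
    strA X p = κ * (1 + ‖ps X p‖ ^ 2) := by
  rw [strA, horth, hnorm, ← Real.sqrt_sq (by positivity : 0 ≤ κ * (1 + ‖ps X p‖ ^ 2))]
  ring_nf

lemma strB_eq (hκ : 0 ≤ κ) (horth : ⟪pt X p, ps X p⟫ = 0)
    (hnorm : 1 - ‖pt X p‖ ^ 2 = κ ^ 2 * (1 + ‖ps X p‖ ^ 2)) :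
    strB X p = κ⁻¹ := by
  have : (1 + ‖ps X p‖ ^ 2) ≠ 0 := by positivity
  rw [strB, strA_eq hκ horth hnorm]
  field_simp

lemma strC_eq_zero (horth : ⟪pt X p, ps X p⟫ = 0) : strC X p = 0 := by
  rw [strC, horth, zero_div]

lemma strD_eq (hκ : 0 ≤ κ) (horth : ⟪pt X p, ps X p⟫ = 0)
    (hnorm : 1 - ‖pt X p‖ ^ 2 = κ ^ 2 * (1 + ‖ps X p‖ ^ 2)) :
    strD X p = κ := by
  have : (1 + ‖ps X p‖ ^ 2) ≠ 0 := by positivity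
  rw [strD, strA_eq hκ horth hnorm, hnorm]
  rcases hκ.eq_or_lt with rfl | hκ
  · simp
  · field_simp

end StringCoefficients

theorem statement0_general (d : ℕ) (κ : ℝ) (hκ0 : 0 < κ)
    (X : ℝ × ℝ → EuclideanSpace ℝ (Fin d))
    (hwave : ∀ p : ℝ × ℝ, pt (pt X) p = κ ^ 2 • ps (ps X) p)
    (hplus : ∀ p : ℝ × ℝ, ‖pt X p + κ • ps X p‖ ^ 2 = 1 - κ ^ 2)
    (hminus : ∀ p : ℝ × ℝ, ‖pt X p - κ • ps X p‖ ^ 2 = 1 - κ ^ 2) :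
    ∀ p : ℝ × ℝ,
      pt (fun q => strB X q • pt X q - strC X q • ps X q) p
        - ps (fun q => strC X q • pt X q + strD X q • ps X q) p = 0 := by
  have horth (q : ℝ × ℝ) : ⟪pt X q, ps X q⟫ = 0 :=
    real_inner_eq_zero_of_norm_add_smul_sq_eq_norm_sub_smul_sq hκ0.ne'
      ((hplus q).trans (hminus q).symm)
  have hnorm (q : ℝ × ℝ) : 1 - ‖pt X q‖ ^ 2 = κ ^ 2 * (1 + ‖ps X q‖ ^ 2) := by
    have := hplus q
    rw [norm_add_smul_sq_of_real_inner_eq_zero κ (horth q)] at this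
    linarith
  have htime : (fun q => strB X q • pt X q - strC X q • ps X q) = fun q => κ⁻¹ • pt X q := by
    ext1 q
    rw [strB_eq hκ0.le (horth q) (hnorm q), strC_eq_zero (horth q), zero_smul, sub_zero]
  have hspace : (fun q => strC X q • pt X q + strD X q • ps X q) = fun q => κ • ps X q := by
    ext1 q
    rw [strC_eq_zero (horth q), strD_eq hκ0.le (horth q) (hnorm q), zero_smul, zero_add]
  intro p
  rw [htime, hspace, pt_const_smul, ps_const_smul, hwave, smul_smul, inv_mul_eq_div,
    pow_two, mul_div_cancel_left₀ _ hκ0.ne', sub_self]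

/-- Every solution of the linear wave equation `∂ₜₜX = κ²∂ₛₛX` satisfying the
relativistic constraint `|∂ₜX ± κ∂ₛX|² = 1 - κ²` everywhere is a global classical
relativistic string, i.e. solves the relativistic string equation. -/
theorem statement0 (d : ℕ) (hd : 1 ≤ d) (κ : ℝ) (hκ0 : 0 < κ) (hκ1 : κ < 1)
    (X : ℝ × ℝ → EuclideanSpace ℝ (Fin d)) (hX : ContDiff ℝ 2 X)
    (hwave : ∀ p : ℝ × ℝ, pt (pt X) p = κ ^ 2 • ps (ps X) p)
    (hplus : ∀ p : ℝ × ℝ, ‖pt X p + κ • ps X p‖ ^ 2 = 1 - κ ^ 2)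
    (hminus : ∀ p : ℝ × ℝ, ‖pt X p - κ • ps X p‖ ^ 2 = 1 - κ ^ 2) :
    ∀ p : ℝ × ℝ,
      pt (fun q => strB X q • pt X q - strC X q • ps X q) p
        - ps (fun q => strC X q • pt X q + strD X q • ps X q) p = 0 :=
  statement0_general d κ hκ0 X hwave hplus hminus
end

section
/- Let d ≥ 1, let 0 < κ < 1, and let X : ℝ² → ℝ^d be a C² function satisfying the wave equation ∂ₜₜX = κ²∂ₛₛX on ℝ². Suppose that at time t = 0 one has |∂ₜX(0,s) + κ∂ₛX(0,s)|² = 1 − κ² and |∂ₜX(0,s) − κ∂ₛX(0,s)|² = 1 − κ² for all s ∈ ℝ. Then |∂ₜX(t,s) + κ∂ₛX(t,s)|² = 1 − κ² and |∂ₜX(t,s) − κ∂ₛX(t,s)|² = 1 − κ² for all (t,s) ∈ ℝ². -/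
open scoped RealInnerProductSpace

/-!
Since `∂ₜₜ - κ²∂ₛₛ = (∂ₜ - κ∂ₛ)(∂ₜ + κ∂ₛ)`, the Riemann invariants `∂ₜX ± κ∂ₛX` of a solution
of the wave equation are constant along the characteristics `s ± κt = const`. Every point is
joined to the line `t = 0` by a characteristic of each family, so the values of the Riemann
invariants, and in particular their norms, are those they take at time `0`.
-/

theorem apply_add_smul_eq_of_fderiv_apply_eq_zero {E G : Type*}
    [NormedAddCommGroup E] [NormedSpace ℝ E] [NormedAddCommGroup G] [NormedSpace ℝ G]
    {u : E → G} (hu : Differentiable ℝ u) {v : E} (huv : ∀ q, fderiv ℝ u q v = 0)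
    (p : E) (t : ℝ) : u (p + t • v) = u p := by
  have hline : ∀ τ : ℝ, HasDerivAt (fun τ : ℝ => u (p + τ • v)) 0 τ := by
    intro τ
    have hγ : HasDerivAt (fun τ : ℝ => p + τ • v) v τ := by
      simpa using ((hasDerivAt_id τ).smul_const v).const_add p
    simpa [huv, Function.comp_def] using (hu _).hasFDerivAt.comp_hasDerivAt τ hγ
  simpa using is_const_of_deriv_eq_zero (fun τ => (hline τ).differentiableAt)
    (fun τ => (hline τ).deriv) t 0

section PartialDerivatives

variable {F : Type*} [NormedAddCommGroup F] [NormedSpace ℝ F] {X : ℝ × ℝ → F}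

theorem pt_eq_fderiv (hX : Differentiable ℝ X) (p : ℝ × ℝ) : pt X p = fderiv ℝ X p (1, 0) := by
  have hγ : HasDerivAt (fun t : ℝ => (t, p.2)) ((1 : ℝ), (0 : ℝ)) p.1 :=
    (hasDerivAt_id p.1).prodMk (hasDerivAt_const p.1 p.2)
  exact ((hX p).hasFDerivAt.comp_hasDerivAt p.1 hγ).deriv

theorem ps_eq_fderiv (hX : Differentiable ℝ X) (p : ℝ × ℝ) : ps X p = fderiv ℝ X p (0, 1) := by
  have hγ : HasDerivAt (fun s : ℝ => (p.1, s)) ((0 : ℝ), (1 : ℝ)) p.2 :=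
    (hasDerivAt_const p.2 p.1).prodMk (hasDerivAt_id p.2)
  exact ((hX p).hasFDerivAt.comp_hasDerivAt p.2 hγ).deriv

theorem pt_add_smul_ps_eq_fderiv (hX : Differentiable ℝ X) (c : ℝ) (p : ℝ × ℝ) :
    pt X p + c • ps X p = fderiv ℝ X p (1, c) := by
  rw [pt_eq_fderiv hX, ps_eq_fderiv hX, ← map_smul, ← map_add]
  simp

theorem differentiable_fderiv_of_contDiff_two (hX : ContDiff ℝ 2 X) :
    Differentiable ℝ (fderiv ℝ X) :=
  (hX.fderiv_right (m := 1) (by norm_num)).differentiable one_ne_zero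

theorem fderiv_fderiv_apply_right (hX : ContDiff ℝ 2 X) (w p : ℝ × ℝ) :
    fderiv ℝ (fun q => fderiv ℝ X q w) p = (fderiv ℝ (fderiv ℝ X) p).flip w := by
  simpa using fderiv_clm_apply (differentiable_fderiv_of_contDiff_two hX p)
    (differentiableAt_const w)

theorem pt_pt_eq_fderiv_fderiv (hX : ContDiff ℝ 2 X) (p : ℝ × ℝ) :
    pt (pt X) p = fderiv ℝ (fderiv ℝ X) p (1, 0) (1, 0) := by
  have hpt : pt X = fun q => fderiv ℝ X q (1, 0) :=
    funext (pt_eq_fderiv (hX.differentiable two_ne_zero))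
  rw [hpt, pt_eq_fderiv ((differentiable_fderiv_of_contDiff_two hX).clm_apply
    (differentiable_const _)), fderiv_fderiv_apply_right hX]
  rfl

theorem ps_ps_eq_fderiv_fderiv (hX : ContDiff ℝ 2 X) (p : ℝ × ℝ) :
    ps (ps X) p = fderiv ℝ (fderiv ℝ X) p (0, 1) (0, 1) := by
  have hps : ps X = fun q => fderiv ℝ X q (0, 1) :=
    funext (ps_eq_fderiv (hX.differentiable two_ne_zero))
  rw [hps, ps_eq_fderiv ((differentiable_fderiv_of_contDiff_two hX).clm_apply
    (differentiable_const _)), fderiv_fderiv_apply_right hX]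
  rfl

theorem fderiv_fderiv_apply_characteristic (hX : ContDiff ℝ 2 X) (c : ℝ) (p : ℝ × ℝ) :
    fderiv ℝ (fderiv ℝ X) p (1, -c) (1, c) = pt (pt X) p - c ^ 2 • ps (ps X) p := by
  have hsymm := hX.contDiffAt.isSymmSndFDerivAt (x := p) (by simp)
  have hminus : ((1 : ℝ), -c) = (1, 0) - c • ((0 : ℝ), (1 : ℝ)) := by simp
  have hplus : ((1 : ℝ), c) = (1, 0) + c • ((0 : ℝ), (1 : ℝ)) := by simp
  rw [pt_pt_eq_fderiv_fderiv hX, ps_ps_eq_fderiv_fderiv hX, hminus, hplus]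
  simp only [map_sub, map_add, map_smul, sub_apply, smul_apply, hsymm (0, 1) (1, 0)]
  module

variable {c : ℝ}

theorem pt_add_smul_ps_add_smul_characteristic (hX : ContDiff ℝ 2 X)
    (hwave : ∀ p : ℝ × ℝ, pt (pt X) p = c ^ 2 • ps (ps X) p) (p : ℝ × ℝ) (t : ℝ) :
    pt X (p + t • (1, -c)) + c • ps X (p + t • (1, -c)) = pt X p + c • ps X p := by
  simp only [pt_add_smul_ps_eq_fderiv (hX.differentiable two_ne_zero)]
  refine apply_add_smul_eq_of_fderiv_apply_eq_zero
    ((differentiable_fderiv_of_contDiff_two hX).clm_apply (differentiable_const _))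
    (fun q => ?_) p t
  rw [fderiv_fderiv_apply_right hX, ContinuousLinearMap.flip_apply,
    fderiv_fderiv_apply_characteristic hX, hwave, sub_self]

theorem pt_add_smul_ps_eq_at_zero (hX : ContDiff ℝ 2 X)
    (hwave : ∀ p : ℝ × ℝ, pt (pt X) p = c ^ 2 • ps (ps X) p) (t s : ℝ) :
    pt X (t, s) + c • ps X (t, s) = pt X (0, s + c * t) + c • ps X (0, s + c * t) := by
  have hp : ((0 : ℝ), s + c * t) + t • ((1 : ℝ), -c) = (t, s) := by
    ext <;> simp; ring
  rw [← hp, pt_add_smul_ps_add_smul_characteristic hX hwave]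

end PartialDerivatives

theorem statement2_general (d : ℕ) (κ : ℝ)
    (X : ℝ × ℝ → EuclideanSpace ℝ (Fin d)) (hX : ContDiff ℝ 2 X)
    (hwave : ∀ p : ℝ × ℝ, pt (pt X) p = κ ^ 2 • ps (ps X) p)
    (hplus0 : ∀ s : ℝ, ‖pt X (0, s) + κ • ps X (0, s)‖ ^ 2 = 1 - κ ^ 2)
    (hminus0 : ∀ s : ℝ, ‖pt X (0, s) - κ • ps X (0, s)‖ ^ 2 = 1 - κ ^ 2) :
    ∀ p : ℝ × ℝ,
      ‖pt X p + κ • ps X p‖ ^ 2 = 1 - κ ^ 2 ∧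
      ‖pt X p - κ • ps X p‖ ^ 2 = 1 - κ ^ 2 := by
  rintro ⟨t, s⟩
  have hwave_neg : ∀ p : ℝ × ℝ, pt (pt X) p = (-κ) ^ 2 • ps (ps X) p := by simpa using hwave
  have hminus := pt_add_smul_ps_eq_at_zero hX hwave_neg t s
  simp only [neg_smul, neg_mul, ← sub_eq_add_neg] at hminus
  rw [pt_add_smul_ps_eq_at_zero hX hwave, hminus]
  exact ⟨hplus0 _, hminus0 _⟩

/-- The relativistic constraint `|∂ₜX ± κ∂ₛX|² = 1 - κ²` is propagated by the
wave equation `∂ₜₜX = κ²∂ₛₛX`: if it holds at time `t = 0` it holds at all times. -/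
theorem statement2 (d : ℕ) (hd : 1 ≤ d) (κ : ℝ) (hκ0 : 0 < κ) (hκ1 : κ < 1)
    (X : ℝ × ℝ → EuclideanSpace ℝ (Fin d)) (hX : ContDiff ℝ 2 X)
    (hwave : ∀ p : ℝ × ℝ, pt (pt X) p = κ ^ 2 • ps (ps X) p)
    (hplus0 : ∀ s : ℝ, ‖pt X (0, s) + κ • ps X (0, s)‖ ^ 2 = 1 - κ ^ 2)
    (hminus0 : ∀ s : ℝ, ‖pt X (0, s) - κ • ps X (0, s)‖ ^ 2 = 1 - κ ^ 2) :
    ∀ p : ℝ × ℝ,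
      ‖pt X p + κ • ps X p‖ ^ 2 = 1 - κ ^ 2 ∧
      ‖pt X p - κ • ps X p‖ ^ 2 = 1 - κ ^ 2 :=
  statement2_general d κ X hX hwave hplus0 hminus0
end

section
/- Let d ≥ 1 and 0 < κ < 1, and set c = √(1 − κ²)/(2κ). Let (Xₙ) be a sequence of C² functions Xₙ : ℝ² → ℝ^d with Xₙ(0,0) = 0, satisfying the wave equation ∂ₜₜXₙ = κ²∂ₛₛXₙ on ℝ² and the constraint |∂ₜXₙ ± κ∂ₛXₙ|² = 1 − κ² everywhere (both signs). If Xₙ converges to a function X : ℝ² → ℝ^d uniformly on every compact subset of ℝ², then there exist Lipschitz functions F, G : ℝ → ℝ^d, each with Lipschitz constant at most c, with F(0) + G(0) = 0, such that X(t,s) = F(s + κt) + G(s − κt) for all (t,s) ∈ ℝ². -/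
/-!
In the characteristic directions `w± = ((±2κ)⁻¹, 1/2)` the wave equation says exactly that the
mixed second derivative `D²Xₙ(w₊, w₋)` vanishes, so `Xₙ(a w₊ + b w₋) + Xₙ(0) = Xₙ(a w₊) + Xₙ(b w₋)`:
each `Xₙ` is the sum of its restrictions to the two characteristic lines through the origin.
The derivative of such a restriction is `(±2κ)⁻¹ (∂ₜ ± κ∂ₛ)Xₙ`, of norm `√(1 - κ²)/(2κ)` by the
constraint. Both the decomposition and the Lipschitz bound pass to pointwise limits.
-/

open scoped RealInnerProductSpace

open Filter Topology NNReal

section LineDerivatives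

variable {V E : Type*} [NormedAddCommGroup V] [NormedSpace ℝ V]
  [NormedAddCommGroup E] [NormedSpace ℝ E] {Z : V → E}

lemma HasFDerivAt.hasDerivAt_add_smul {f' : V →L[ℝ] E} {x v : V} {r : ℝ}
    (hZ : HasFDerivAt Z f' (x + r • v)) :
    HasDerivAt (fun r : ℝ => Z (x + r • v)) (f' v) r := by
  have hline : HasDerivAt (fun r : ℝ => x + r • v) v r := by
    simpa using ((hasDerivAt_id r).smul_const v).const_add x
  exact hZ.comp_hasDerivAt r hline

lemma hasFDerivAt_fderiv_apply {x : V} (hZ : DifferentiableAt ℝ (fderiv ℝ Z) x) (w : V) :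
    HasFDerivAt (fun y => fderiv ℝ Z y w) ((fderiv ℝ (fderiv ℝ Z) x).flip w) x :=
  (ContinuousLinearMap.apply ℝ E w).hasFDerivAt.comp x hZ.hasFDerivAt

lemma fderiv_apply_add_smul_of_fderiv_fderiv_eq_zero (hZ : Differentiable ℝ (fderiv ℝ Z))
    {v w : V} (hvw : ∀ x, fderiv ℝ (fderiv ℝ Z) x v w = 0) (x : V) (a : ℝ) :
    fderiv ℝ Z (x + a • v) w = fderiv ℝ Z x w := by
  have hderiv (r : ℝ) : HasDerivAt (fun r : ℝ => fderiv ℝ Z (x + r • v) w) 0 r := by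
    simpa [hvw] using (hasFDerivAt_fderiv_apply (hZ (x + r • v)) w).hasDerivAt_add_smul
  simpa using is_const_of_deriv_eq_zero (fun r => (hderiv r).differentiableAt)
    (fun r => (hderiv r).deriv) a 0

theorem add_smul_add_smul_add_eq_of_fderiv_fderiv_eq_zero (hZ : Differentiable ℝ Z)
    (hZ' : Differentiable ℝ (fderiv ℝ Z)) {v w : V}
    (hvw : ∀ x, fderiv ℝ (fderiv ℝ Z) x v w = 0) (x : V) (a b : ℝ) :
    Z (x + a • v + b • w) + Z x = Z (x + a • v) + Z (x + b • w) := by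
  have hderiv (r : ℝ) :
      HasDerivAt (fun r : ℝ => Z (x + a • v + r • w) - Z (x + r • w)) 0 r := by
    have hshift : x + a • v + r • w = x + r • w + a • v := by abel
    have := (hZ (x + a • v + r • w)).hasFDerivAt.hasDerivAt_add_smul.sub
      (hZ (x + r • w)).hasFDerivAt.hasDerivAt_add_smul
    rw [hshift, fderiv_apply_add_smul_of_fderiv_fderiv_eq_zero hZ' hvw, sub_self] at this
    exact this
  have hconst := is_const_of_deriv_eq_zero (fun r => (hderiv r).differentiableAt)
    (fun r => (hderiv r).deriv) b 0
  simp only [zero_smul, add_zero] at hconst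
  rw [← sub_eq_sub_iff_add_eq_add, hconst]

lemma lipschitzWith_comp_smul_of_norm_fderiv_le (hZ : Differentiable ℝ Z) {w : V} {C : ℝ≥0}
    (h : ∀ x, ‖fderiv ℝ Z x w‖ ≤ C) : LipschitzWith C (fun r : ℝ => Z (r • w)) := by
  have hderiv (r : ℝ) : HasDerivAt (fun r : ℝ => Z (r • w)) (fderiv ℝ Z (r • w) w) r := by
    simpa using (hZ (0 + r • w)).hasFDerivAt.hasDerivAt_add_smul
  refine lipschitzWith_of_nnnorm_deriv_le (fun r => (hderiv r).differentiableAt) fun r => ?_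
  rw [(hderiv r).deriv, ← NNReal.coe_le_coe, coe_nnnorm]
  exact h _

end LineDerivatives

theorem LipschitzWith.of_tendsto {α β ι : Type*} [PseudoEMetricSpace α] [PseudoEMetricSpace β]
    {l : Filter ι} [l.NeBot] {f : ι → α → β} {g : α → β} {K : ℝ≥0}
    (hf : ∀ i, LipschitzWith K (f i)) (hg : ∀ x, Tendsto (fun i => f i x) l (𝓝 (g x))) :
    LipschitzWith K g :=
  (isClosed_setOfPred_lipschitzWith K).mem_of_tendsto (tendsto_pi_nhds.2 hg)
    (Eventually.of_forall hf)

section WaveEquation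

variable {E : Type*} [NormedAddCommGroup E] [NormedSpace ℝ E] {Z : ℝ × ℝ → E} {κ : ℝ}

lemma pt_eq_fderiv_s4 {p : ℝ × ℝ} (hZ : DifferentiableAt ℝ Z p) : pt Z p = fderiv ℝ Z p (1, 0) :=
  (hZ.hasFDerivAt.comp_hasDerivAt p.1
    ((hasDerivAt_id p.1).prodMk (hasDerivAt_const p.1 p.2))).deriv

lemma ps_eq_fderiv_s4 {p : ℝ × ℝ} (hZ : DifferentiableAt ℝ Z p) : ps Z p = fderiv ℝ Z p (0, 1) :=
  (hZ.hasFDerivAt.comp_hasDerivAt p.2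
    ((hasDerivAt_const p.2 p.1).prodMk (hasDerivAt_id p.2))).deriv

lemma fderiv_apply_prod {p : ℝ × ℝ} (hZ : DifferentiableAt ℝ Z p) (a b : ℝ) :
    fderiv ℝ Z p (a, b) = a • pt Z p + b • ps Z p := by
  have hab : ((a, b) : ℝ × ℝ) = a • (1, 0) + b • (0, 1) := by simp
  rw [hab, map_add, map_smul, map_smul, pt_eq_fderiv_s4 hZ, ps_eq_fderiv_s4 hZ]

lemma fderiv_fderiv_apply_prod (hZ : ContDiff ℝ 2 Z) (p : ℝ × ℝ) (a b a' b' : ℝ) :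
    fderiv ℝ (fderiv ℝ Z) p (a, b) (a', b') = (a * a') • pt (pt Z) p
      + (a * b' + b * a') • fderiv ℝ (fderiv ℝ Z) p (1, 0) (0, 1) + (b * b') • ps (ps Z) p := by
  have hZ1 : Differentiable ℝ Z := hZ.differentiable two_ne_zero
  have hZ2 : Differentiable ℝ (fderiv ℝ Z) :=
    (hZ.fderiv_right (m := 1) le_rfl).differentiable one_ne_zero
  have hsymm : IsSymmSndFDerivAt ℝ Z p := hZ.contDiffAt.isSymmSndFDerivAt (by simp)
  have hptt : pt (pt Z) p = fderiv ℝ (fderiv ℝ Z) p (1, 0) (1, 0) := by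
    have hpt : pt Z = fun q => fderiv ℝ Z q (1, 0) := funext fun q => pt_eq_fderiv_s4 (hZ1 q)
    rw [hpt,
      pt_eq_fderiv_s4 (hasFDerivAt_fderiv_apply (hZ2 p) _).differentiableAt,
      (hasFDerivAt_fderiv_apply (hZ2 p) _).fderiv]
    rfl
  have hpss : ps (ps Z) p = fderiv ℝ (fderiv ℝ Z) p (0, 1) (0, 1) := by
    have hps : ps Z = fun q => fderiv ℝ Z q (0, 1) := funext fun q => ps_eq_fderiv_s4 (hZ1 q)
    rw [hps,
      ps_eq_fderiv_s4 (hasFDerivAt_fderiv_apply (hZ2 p) _).differentiableAt,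
      (hasFDerivAt_fderiv_apply (hZ2 p) _).fderiv]
    rfl
  have hab : ∀ a b : ℝ, ((a, b) : ℝ × ℝ) = a • (1, 0) + b • (0, 1) := by simp
  rw [hab a b, hab a' b', hptt, hpss]
  simp only [map_add, map_smul, add_apply, smul_apply]
  rw [hsymm (0, 1) (1, 0)]
  module

theorem fderiv_fderiv_apply_characteristic_eq_zero (hκ : κ ≠ 0) (hZ : ContDiff ℝ 2 Z)
    (hwave : ∀ p, pt (pt Z) p = κ ^ 2 • ps (ps Z) p) (p : ℝ × ℝ) :
    fderiv ℝ (fderiv ℝ Z) p ((2 * κ)⁻¹, 2⁻¹) ((2 * -κ)⁻¹, 2⁻¹) = 0 := by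
  have hmixed : (2 * κ)⁻¹ * 2⁻¹ + 2⁻¹ * (2 * -κ)⁻¹ = (0 : ℝ) := by
    rw [mul_neg, inv_neg]; ring
  have hpure : (2 * κ)⁻¹ * (2 * -κ)⁻¹ * κ ^ 2 + 2⁻¹ * 2⁻¹ = (0 : ℝ) := by
    field_simp; ring
  rw [fderiv_fderiv_apply_prod hZ, hwave, hmixed, zero_smul, add_zero, smul_smul, ← add_smul,
    hpure, zero_smul]

/-- The restriction of `Z` to the characteristic line `s = κ t`, parametrized by `s + κ t`. -/
noncomputable def characteristicProfile (κ : ℝ) (Z : ℝ × ℝ → E) (u : ℝ) : E :=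
  Z (u • ((2 * κ)⁻¹, 2⁻¹))

theorem add_eq_characteristicProfile_add (hκ : κ ≠ 0) (hZ : ContDiff ℝ 2 Z)
    (hwave : ∀ p, pt (pt Z) p = κ ^ 2 • ps (ps Z) p) (t s : ℝ) :
    Z (t, s) + Z 0 =
      characteristicProfile κ Z (s + κ * t) + characteristicProfile (-κ) Z (s - κ * t) := by
  have hZ2 : Differentiable ℝ (fderiv ℝ Z) :=
    (hZ.fderiv_right (m := 1) le_rfl).differentiable one_ne_zero
  have hsplit := add_smul_add_smul_add_eq_of_fderiv_fderiv_eq_zero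
    (hZ.differentiable two_ne_zero) hZ2
    (fderiv_fderiv_apply_characteristic_eq_zero hκ hZ hwave) 0 (s + κ * t) (s - κ * t)
  have hpoint : (s + κ * t) • ((2 * κ)⁻¹, (2 : ℝ)⁻¹) + (s - κ * t) • ((2 * -κ)⁻¹, (2 : ℝ)⁻¹)
      = (t, s) := by
    simp only [Prod.smul_mk, smul_eq_mul, Prod.mk_add_mk, Prod.mk.injEq]
    constructor <;> field_simp <;> ring
  rw [zero_add, zero_add, hpoint] at hsplit
  exact hsplit

theorem lipschitzWith_characteristicProfile (hκ : κ ≠ 0) (hZ : Differentiable ℝ Z)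
    (h : ∀ p, ‖pt Z p + κ • ps Z p‖ ^ 2 ≤ 1 - κ ^ 2) :
    LipschitzWith (√(1 - κ ^ 2) / (2 * |κ|)).toNNReal (characteristicProfile κ Z) := by
  refine lipschitzWith_comp_smul_of_norm_fderiv_le hZ fun p => ?_
  have hcomb : (2 * κ)⁻¹ • pt Z p + (2 : ℝ)⁻¹ • ps Z p = (2 * κ)⁻¹ • (pt Z p + κ • ps Z p) := by
    rw [smul_add, smul_smul]; congr 2; field_simp
  rw [fderiv_apply_prod (hZ p), hcomb, norm_smul, Real.coe_toNNReal _ (by positivity),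
    norm_inv, norm_mul, Real.norm_two, Real.norm_eq_abs, div_eq_inv_mul]
  gcongr
  exact Real.le_sqrt_of_sq_le (h p)

end WaveEquation

theorem statement4_general (d : ℕ) (κ : ℝ) (hκ0 : 0 < κ)
    (c : ℝ) (hc : c = Real.sqrt (1 - κ ^ 2) / (2 * κ))
    (X : ℕ → ℝ × ℝ → EuclideanSpace ℝ (Fin d))
    (hC2 : ∀ n, ContDiff ℝ 2 (X n))
    (hnorm : ∀ n, X n (0, 0) = 0)
    (hwave : ∀ n, ∀ p : ℝ × ℝ, pt (pt (X n)) p = κ ^ 2 • ps (ps (X n)) p)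
    (hplus : ∀ n, ∀ p : ℝ × ℝ, ‖pt (X n) p + κ • ps (X n) p‖ ^ 2 = 1 - κ ^ 2)
    (hminus : ∀ n, ∀ p : ℝ × ℝ, ‖pt (X n) p - κ • ps (X n) p‖ ^ 2 = 1 - κ ^ 2)
    (Xlim : ℝ × ℝ → EuclideanSpace ℝ (Fin d))
    (hconv : ∀ K : Set (ℝ × ℝ), IsCompact K →
      TendstoUniformlyOn X Xlim Filter.atTop K) :
    ∃ F G : ℝ → EuclideanSpace ℝ (Fin d),
      LipschitzWith (Real.toNNReal c) F ∧
      LipschitzWith (Real.toNNReal c) G ∧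
      F 0 + G 0 = 0 ∧
      ∀ t s : ℝ, Xlim (t, s) = F (s + κ * t) + G (s - κ * t) := by
  have hlim (p : ℝ × ℝ) : Tendsto (fun n => X n p) atTop (𝓝 (Xlim p)) :=
    (hconv {p} isCompact_singleton).tendsto_at rfl
  have hX0 (n : ℕ) : X n 0 = 0 := hnorm n
  have hXlim0 : Xlim 0 = 0 := tendsto_nhds_unique (hlim 0) (by simp [hX0])
  have hc' : c = √(1 - κ ^ 2) / (2 * |κ|) := by rw [hc, abs_of_pos hκ0]
  have hdiff (n : ℕ) : Differentiable ℝ (X n) := (hC2 n).differentiable two_ne_zero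
  refine ⟨characteristicProfile κ Xlim, characteristicProfile (-κ) Xlim, ?_, ?_, ?_, fun t s => ?_⟩
  · refine LipschitzWith.of_tendsto (l := atTop) (fun n => ?_) fun u => hlim _
    rw [hc']
    exact lipschitzWith_characteristicProfile hκ0.ne' (hdiff n) fun p => (hplus n p).le
  · refine LipschitzWith.of_tendsto (l := atTop) (fun n => ?_) fun u => hlim _
    have hLip := lipschitzWith_characteristicProfile (neg_ne_zero.2 hκ0.ne') (hdiff n)
      fun p => by simpa [neg_smul, ← sub_eq_add_neg] using (hminus n p).le
    rwa [neg_sq, abs_neg, ← hc'] at hLip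
  · simp [characteristicProfile, hXlim0]
  · have hrep (n : ℕ) : X n (t, s) = characteristicProfile κ (X n) (s + κ * t)
        + characteristicProfile (-κ) (X n) (s - κ * t) := by
      simpa [hX0] using add_eq_characteristicProfile_add hκ0.ne' (hC2 n) (hwave n) t s
    have hlim_ts := hlim (t, s)
    simp_rw [hrep] at hlim_ts
    exact tendsto_nhds_unique hlim_ts ((hlim _).add (hlim _))

/-- A locally uniform limit of relativistic strings (solutions of the wave
equation with the relativistic constraint) is a "subrelativistic" string: it has
the d'Alembert form `X(t,s) = F(s + κt) + G(s - κt)` with `F`, `G` Lipschitz of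
constant at most `c = √(1 - κ²)/(2κ)`. -/
theorem statement4 (d : ℕ) (hd : 1 ≤ d) (κ : ℝ) (hκ0 : 0 < κ) (hκ1 : κ < 1)
    (c : ℝ) (hc : c = Real.sqrt (1 - κ ^ 2) / (2 * κ))
    (X : ℕ → ℝ × ℝ → EuclideanSpace ℝ (Fin d))
    (hC2 : ∀ n, ContDiff ℝ 2 (X n))
    (hnorm : ∀ n, X n (0, 0) = 0)
    (hwave : ∀ n, ∀ p : ℝ × ℝ, pt (pt (X n)) p = κ ^ 2 • ps (ps (X n)) p)
    (hplus : ∀ n, ∀ p : ℝ × ℝ, ‖pt (X n) p + κ • ps (X n) p‖ ^ 2 = 1 - κ ^ 2)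
    (hminus : ∀ n, ∀ p : ℝ × ℝ, ‖pt (X n) p - κ • ps (X n) p‖ ^ 2 = 1 - κ ^ 2)
    (Xlim : ℝ × ℝ → EuclideanSpace ℝ (Fin d))
    (hconv : ∀ K : Set (ℝ × ℝ), IsCompact K →
      TendstoUniformlyOn X Xlim Filter.atTop K) :
    ∃ F G : ℝ → EuclideanSpace ℝ (Fin d),
      LipschitzWith (Real.toNNReal c) F ∧
      LipschitzWith (Real.toNNReal c) G ∧
      F 0 + G 0 = 0 ∧
      ∀ t s : ℝ, Xlim (t, s) = F (s + κ * t) + G (s - κ * t) :=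
  statement4_general d κ hκ0 c hc X hC2 hnorm hwave hplus hminus Xlim hconv
end

section
/- Let d ≥ 1 and 0 < κ < 1, and set c = √(1 − κ²)/(2κ). Let F, G : ℝ → ℝ^d be Lipschitz with Lipschitz constant at most c and F(0) + G(0) = 0, and define X(t,s) = F(s + κt) + G(s − κt). Then there exist sequences of Lipschitz functions Fₙ, Gₙ : ℝ → ℝ^d with Fₙ(0) + Gₙ(0) = 0 and |Fₙ′(y)| = |Gₙ′(y)| = c for almost every y ∈ ℝ, such that the functions Xₙ(t,s) = Fₙ(s + κt) + Gₙ(s − κt) converge to X uniformly on every compact subset of ℝ². (In particular every subrelativistic string is a locally uniform limit of relativistic strings.) -/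
open scoped RealInnerProductSpace

/-!
On each cell `[h k, h (k + 1)]` of a grid, replace the `c`-Lipschitz map `F` by a path that moves
at speed exactly `c` along the line from `F (h k)` to `F (h (k + 1))`, overshooting and turning
back once so as to arrive on time; this is possible because `‖F (h (k + 1)) - F (h k)‖ ≤ c h`.
The resulting zigzag agrees with `F` on the grid, is `c`-Lipschitz with derivative of norm `c`
off a countable set, and hence stays within `2 c h` of `F`. Letting `h → 0` and composing with
`s ± κ t` gives the approximating relativistic strings.
-/

open Set Filter Topology MeasureTheory
open scoped NNReal

theorem mem_Ico_mul_floor_div {h : ℝ} (hh : 0 < h) (y : ℝ) :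
    y ∈ Ico (h * ⌊y / h⌋) (h * (⌊y / h⌋ + 1)) := by
  constructor
  · rw [← le_div_iff₀' hh]; exact Int.floor_le _
  · rw [← div_lt_iff₀' hh]; exact Int.lt_floor_add_one _

theorem LipschitzWith.norm_sub_grid_le {E : Type*} [SeminormedAddCommGroup E] {C : ℝ≥0}
    {F : ℝ → E} (hF : LipschitzWith C F) {h : ℝ} (hh : 0 < h) (k : ℤ) :
    ‖F (h * (k + 1)) - F (h * k)‖ ≤ C * (h * (k + 1) - h * k) := by
  have := hF.dist_le_mul (h * (k + 1)) (h * k)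
  rwa [dist_eq_norm, Real.dist_eq, abs_of_nonneg (by nlinarith)] at this

section Gluing

variable {α : Type*} [PseudoMetricSpace α] {f : ℝ → α} {C : ℝ≥0}

theorem LipschitzOnWith.Icc_Icc {x y z : ℝ} (hxy : LipschitzOnWith C f (Icc x y))
    (hyz : LipschitzOnWith C f (Icc y z)) : LipschitzOnWith C f (Icc x z) := by
  rcases lt_or_ge z y with hzy | hyz'
  · exact hxy.mono (Icc_subset_Icc_right hzy.le)
  rcases lt_or_ge y x with hyx | hxy'
  · exact hyz.mono (Icc_subset_Icc_left hyx.le)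
  have key : ∀ u ∈ Icc x y, ∀ v ∈ Icc y z, dist (f u) (f v) ≤ C * dist u v := by
    intro u hu v hv
    have hy : y ∈ Icc x y ∩ Icc y z := ⟨⟨hxy', le_rfl⟩, le_rfl, hyz'⟩
    calc dist (f u) (f v) ≤ dist (f u) (f y) + dist (f y) (f v) := dist_triangle _ _ _
      _ ≤ C * dist u y + C * dist y v :=
          add_le_add (hxy.dist_le_mul u hu y hy.1) (hyz.dist_le_mul y hy.2 v hv)
      _ = C * dist u v := by
          rw [Real.dist_eq, Real.dist_eq, Real.dist_eq, abs_of_nonpos (by linarith [hu.2]),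
            abs_of_nonpos (by linarith [hv.1]), abs_of_nonpos (by linarith [hu.2, hv.1])]
          ring
  refine LipschitzOnWith.of_dist_le_mul fun u hu v hv => ?_
  rcases le_total u y with huy | hyu <;> rcases le_total v y with hvy | hyv
  · exact hxy.dist_le_mul u ⟨hu.1, huy⟩ v ⟨hv.1, hvy⟩
  · exact key u ⟨hu.1, huy⟩ v ⟨hyv, hv.2⟩
  · rw [dist_comm, dist_comm u]; exact key v ⟨hv.1, hvy⟩ u ⟨hyu, hu.2⟩
  · exact hyz.dist_le_mul u ⟨hyu, hu.2⟩ v ⟨hyv, hv.2⟩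

theorem lipschitzWith_of_lipschitzOnWith_grid {h : ℝ} (hh : 0 < h)
    (hf : ∀ k : ℤ, LipschitzOnWith C f (Icc (h * k) (h * (k + 1)))) : LipschitzWith C f := by
  have hchain : ∀ (k : ℤ) (n : ℕ), LipschitzOnWith C f (Icc (h * k) (h * (k + n))) := by
    intro k n
    induction n with
    | zero => simp [LipschitzOnWith]
    | succ n ih =>
      have := hf (k + n)
      push_cast at this ⊢
      rw [← add_assoc]
      exact ih.Icc_Icc this
  refine LipschitzWith.of_dist_le_mul fun x y => ?_
  obtain ⟨N, hN⟩ := exists_nat_ge ((|x| + |y|) / h)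
  have hmem : ∀ z, |z| ≤ |x| + |y| → z ∈ Icc (h * (-N : ℤ)) (h * ((-N : ℤ) + (2 * N : ℕ))) := by
    intro z hz
    rw [div_le_iff₀ hh] at hN
    push_cast
    constructor <;> nlinarith [abs_le.1 hz]
  exact (hchain (-N) (2 * N)).dist_le_mul x (hmem x (by linarith [abs_nonneg y]))
    y (hmem y (by linarith [abs_nonneg x]))

theorem dist_le_of_lipschitzWith_of_eq_on_grid {g : ℝ → α} {h : ℝ} (hh : 0 < h)
    (hf : LipschitzWith C f) (hg : LipschitzWith C g) (hfg : ∀ k : ℤ, f (h * k) = g (h * k))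
    (y : ℝ) : dist (f y) (g y) ≤ 2 * C * h := by
  set k := ⌊y / h⌋
  obtain ⟨hy1, hy2⟩ := mem_Ico_mul_floor_div hh y
  calc dist (f y) (g y) ≤ dist (f y) (f (h * k)) + dist (g (h * k)) (g y) := by
        rw [hfg k]; exact dist_triangle _ _ _
    _ ≤ C * dist y (h * k) + C * dist (h * k) y :=
        add_le_add (hf.dist_le_mul _ _) (hg.dist_le_mul _ _)
    _ ≤ 2 * C * h := by
        rw [dist_comm (h * k : ℝ), Real.dist_eq, abs_of_nonneg (by linarith)]
        nlinarith [C.coe_nonneg]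

end Gluing

section Zigzag

variable {E : Type*} [NormedAddCommGroup E] [NormedSpace ℝ E] {e : E}

open Classical in
noncomputable def unitDir (e v : E) : E := if v = 0 then e else ‖v‖⁻¹ • v

theorem norm_unitDir (he : ‖e‖ = 1) (v : E) : ‖unitDir e v‖ = 1 := by
  unfold unitDir
  split_ifs with hv
  · exact he
  · rw [norm_smul, norm_inv, norm_norm, inv_mul_cancel₀ (norm_ne_zero_iff.2 hv)]

theorem norm_smul_unitDir (e v : E) : ‖v‖ • unitDir e v = v := by
  unfold unitDir
  split_ifs with hv
  · simp [hv]
  · rw [smul_smul, mul_inv_cancel₀ (norm_ne_zero_iff.2 hv), one_smul]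

/-- The coefficient `m - |C (y - s) - m|`, `m = (‖b - a‖ + C (t - s)) / 2`, is a tent of slopes
`± C` that vanishes at `y = s` and equals `‖b - a‖` at `y = t` whenever `‖b - a‖ ≤ C (t - s)`. -/
noncomputable def zigzagSegment (e : E) (C : ℝ≥0) (s t : ℝ) (a b : E) (y : ℝ) : E :=
  a + ((‖b - a‖ + C * (t - s)) / 2 - |C * (y - s) - (‖b - a‖ + C * (t - s)) / 2|) •
    unitDir e (b - a)

variable {C : ℝ≥0} {s t : ℝ} {a b : E}

theorem zigzagSegment_left (hab : ‖b - a‖ ≤ C * (t - s)) : zigzagSegment e C s t a b s = a := by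
  have hm : 0 ≤ (‖b - a‖ + C * (t - s)) / 2 := by linarith [norm_nonneg (b - a)]
  simp [zigzagSegment, abs_of_nonneg hm]

theorem zigzagSegment_right (hab : ‖b - a‖ ≤ C * (t - s)) : zigzagSegment e C s t a b t = b := by
  have hm : |C * (t - s) - (‖b - a‖ + C * (t - s)) / 2| = (C * (t - s) - ‖b - a‖) / 2 := by
    rw [abs_of_nonneg] <;> linarith
  rw [zigzagSegment, hm, show (‖b - a‖ + C * (t - s)) / 2 - (C * (t - s) - ‖b - a‖) / 2 = ‖b - a‖
    by ring, norm_smul_unitDir, add_sub_cancel]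

theorem lipschitzWith_zigzagSegment (he : ‖e‖ = 1) :
    LipschitzWith C (zigzagSegment e C s t a b) := by
  refine LipschitzWith.of_dist_le_mul fun y y' => ?_
  set m := (‖b - a‖ + C * (t - s)) / 2
  rw [dist_eq_norm, zigzagSegment, zigzagSegment, add_sub_add_left_eq_sub, ← sub_smul, norm_smul,
    norm_unitDir he, mul_one, Real.norm_eq_abs, Real.dist_eq, sub_sub_sub_cancel_left]
  calc abs (|C * (y' - s) - m| - |C * (y - s) - m|) ≤ |(C * (y' - s) - m) - (C * (y - s) - m)| :=
        abs_abs_sub_abs_le_abs_sub _ _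
    _ = C * |y - y'| := by
        rw [show C * (y' - s) - m - (C * (y - s) - m) = C * (y' - y) by ring, abs_mul,
          NNReal.abs_eq, abs_sub_comm]

theorem norm_deriv_zigzagSegment (he : ‖e‖ = 1) {y : ℝ}
    (hy : C * (y - s) ≠ (‖b - a‖ + C * (t - s)) / 2) :
    ‖deriv (zigzagSegment e C s t a b) y‖ = C := by
  set m := (‖b - a‖ + C * (t - s)) / 2
  have hlin : HasDerivAt (fun y : ℝ => C * (y - s) - m) C y := by
    simpa using ((hasDerivAt_id y).sub_const s).const_mul (C : ℝ) |>.sub_const m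
  have habs := (hasDerivAt_abs (sub_ne_zero.2 hy)).comp y hlin
  have hseg := ((habs.const_sub m).smul_const (unitDir e (b - a))).const_add a
  have hderiv : deriv (zigzagSegment e C s t a b) y = _ := hseg.deriv
  rw [hderiv, norm_smul, norm_unitDir he, mul_one, norm_neg, norm_mul, Real.norm_eq_abs,
    Real.norm_eq_abs, NNReal.abs_eq]
  rcases (sub_ne_zero.2 hy).lt_or_gt with h | h <;> simp [h]

noncomputable def zigzagPiece (e : E) (C : ℝ≥0) (h : ℝ) (F : ℝ → E) (k : ℤ) : ℝ → E :=
  zigzagSegment e C (h * k) (h * (k + 1)) (F (h * k)) (F (h * (k + 1)))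

noncomputable def zigzag (e : E) (C : ℝ≥0) (h : ℝ) (F : ℝ → E) (y : ℝ) : E :=
  zigzagPiece e C h F ⌊y / h⌋ y

variable {F : ℝ → E} {h : ℝ}

theorem zigzag_eqOn_Icc (hF : LipschitzWith C F) (hh : 0 < h) (k : ℤ) :
    EqOn (zigzag e C h F) (zigzagPiece e C h F k) (Icc (h * k) (h * (k + 1))) := by
  intro y ⟨hy1, hy2⟩
  rcases hy2.lt_or_eq with hy2 | rfl
  · have hk : ⌊y / h⌋ = k := by
      rw [Int.floor_eq_iff, le_div_iff₀' hh, div_lt_iff₀' hh]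
      exact ⟨hy1, hy2⟩
    rw [zigzag, hk]
  · have hk : ⌊h * (k + 1) / h⌋ = k + 1 := by
      rw [mul_div_cancel_left₀ _ hh.ne', ← Int.cast_one, ← Int.cast_add, Int.floor_intCast]
    have hk' : h * ((k + 1 : ℤ) : ℝ) = h * (k + 1) := by push_cast; ring
    rw [zigzag, hk, zigzagPiece, zigzagPiece, zigzagSegment_right (hF.norm_sub_grid_le hh k), hk',
      zigzagSegment_left]
    exact_mod_cast hF.norm_sub_grid_le hh (k + 1)

theorem zigzag_mul_intCast (hF : LipschitzWith C F) (hh : 0 < h) (k : ℤ) :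
    zigzag e C h F (h * k) = F (h * k) := by
  rw [zigzag_eqOn_Icc hF hh k ⟨le_rfl, by linarith⟩, zigzagPiece,
    zigzagSegment_left (hF.norm_sub_grid_le hh k)]

theorem lipschitzWith_zigzag (he : ‖e‖ = 1) (hF : LipschitzWith C F) (hh : 0 < h) :
    LipschitzWith C (zigzag e C h F) := by
  refine lipschitzWith_of_lipschitzOnWith_grid hh fun k x hx y hy => ?_
  rw [zigzag_eqOn_Icc hF hh k hx, zigzag_eqOn_Icc hF hh k hy]
  exact lipschitzWith_zigzagSegment he x y

theorem ae_norm_deriv_zigzag (he : ‖e‖ = 1) (hC : 0 < C) (hF : LipschitzWith C F) (hh : 0 < h) :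
    ∀ᵐ y, ‖deriv (zigzag e C h F) y‖ = C := by
  set M : ℤ → ℝ := fun k => (‖F (h * (k + 1)) - F (h * k)‖ + C * (h * (k + 1) - h * k)) / 2
  have hturn : ∀ k, {y : ℝ | C * (y - h * k) = M k}.Subsingleton := by
    intro k y hy y' hy'
    have := mul_left_cancel₀ (NNReal.coe_pos.2 hC).ne' (hy.trans hy'.symm)
    linarith
  have hcount : (⋃ k : ℤ, insert (h * k) {y | C * (y - h * k) = M k}).Countable :=
    countable_iUnion fun k => (hturn k).countable.insert _
  filter_upwards [hcount.ae_notMem volume] with y hy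
  simp only [mem_iUnion, mem_insert_iff, mem_ofPred_eq, not_exists, not_or] at hy
  obtain ⟨hy1, hy2⟩ := mem_Ico_mul_floor_div hh y
  have hIoo : y ∈ Ioo (h * ⌊y / h⌋) (h * (⌊y / h⌋ + 1)) :=
    ⟨hy1.lt_of_ne fun hgrid => (hy _).1 hgrid.symm, hy2⟩
  have hlocal : zigzag e C h F =ᶠ[𝓝 y] zigzagPiece e C h F ⌊y / h⌋ :=
    (zigzag_eqOn_Icc hF hh _).eventuallyEq_of_mem
      (mem_of_superset (isOpen_Ioo.mem_nhds hIoo) Ioo_subset_Icc_self)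
  rw [hlocal.deriv_eq]
  exact norm_deriv_zigzagSegment he (hy _).2

theorem tendstoUniformly_zigzag (he : ‖e‖ = 1) (hF : LipschitzWith C F) {h : ℕ → ℝ}
    (hh : ∀ n, 0 < h n) (hlim : Tendsto h atTop (𝓝 0)) :
    TendstoUniformly (fun n => zigzag e C (h n) F) F atTop := by
  rw [Metric.tendstoUniformly_iff]
  intro ε hε
  have hsmall : Tendsto (fun n => 2 * C * h n) atTop (𝓝 0) := by
    simpa using hlim.const_mul (2 * C : ℝ)
  filter_upwards [hsmall.eventually (gt_mem_nhds hε)] with n hn y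
  exact (dist_le_of_lipschitzWith_of_eq_on_grid (hh n) hF (lipschitzWith_zigzag he hF (hh n))
    (fun k => (zigzag_mul_intCast hF (hh n) k).symm) y).trans_lt hn

end Zigzag

/-- Every subrelativistic string `X(t,s) = F(s + κt) + G(s - κt)`, with `F`, `G`
Lipschitz of constant at most `c = √(1 - κ²)/(2κ)` and `F(0) + G(0) = 0`, is the
locally uniform limit of relativistic strings `Xₙ(t,s) = Fₙ(s + κt) + Gₙ(s - κt)`
with `|Fₙ'| = |Gₙ'| = c` almost everywhere. -/
theorem statement5 (d : ℕ) (hd : 1 ≤ d) (κ : ℝ) (hκ0 : 0 < κ) (hκ1 : κ < 1)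
    (c : ℝ) (hc : c = Real.sqrt (1 - κ ^ 2) / (2 * κ))
    (F G : ℝ → EuclideanSpace ℝ (Fin d))
    (hF : LipschitzWith (Real.toNNReal c) F)
    (hG : LipschitzWith (Real.toNNReal c) G)
    (hFG0 : F 0 + G 0 = 0)
    (X : ℝ × ℝ → EuclideanSpace ℝ (Fin d))
    (hX : ∀ t s : ℝ, X (t, s) = F (s + κ * t) + G (s - κ * t)) :
    ∃ Fn Gn : ℕ → ℝ → EuclideanSpace ℝ (Fin d),
      (∀ n, LipschitzWith (Real.toNNReal c) (Fn n)) ∧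
      (∀ n, LipschitzWith (Real.toNNReal c) (Gn n)) ∧
      (∀ n, Fn n 0 + Gn n 0 = 0) ∧
      (∀ n, ∀ᵐ y : ℝ, ‖deriv (Fn n) y‖ = c ∧ ‖deriv (Gn n) y‖ = c) ∧
      ∀ K : Set (ℝ × ℝ), IsCompact K →
        TendstoUniformlyOn
          (fun n p => Fn n (p.2 + κ * p.1) + Gn n (p.2 - κ * p.1))
          X Filter.atTop K := by
  have hc0 : 0 < c := by
    rw [hc]
    exact div_pos (Real.sqrt_pos.2 (by nlinarith)) (by linarith)
  have hC : (c.toNNReal : ℝ) = c := Real.coe_toNNReal c hc0.le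
  set e := EuclideanSpace.single (⟨0, hd⟩ : Fin d) (1 : ℝ)
  have he : ‖e‖ = 1 := by simp [e]
  set h : ℕ → ℝ := fun n => 1 / ((n : ℝ) + 1)
  have hh : ∀ n, 0 < h n := fun n => by positivity
  have hlim : Tendsto h atTop (𝓝 0) := tendsto_one_div_add_atTop_nhds_zero_nat
  refine ⟨fun n => zigzag e c.toNNReal (h n) F, fun n => zigzag e c.toNNReal (h n) G,
    fun n => lipschitzWith_zigzag he hF (hh n), fun n => lipschitzWith_zigzag he hG (hh n),
    fun n => ?_, fun n => ?_, fun K _ => TendstoUniformly.tendstoUniformlyOn ?_⟩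
  · have hF0 := zigzag_mul_intCast (e := e) hF (hh n) 0
    have hG0 := zigzag_mul_intCast (e := e) hG (hh n) 0
    simp only [Int.cast_zero, mul_zero] at hF0 hG0
    beta_reduce
    rw [hF0, hG0, hFG0]
  · filter_upwards [ae_norm_deriv_zigzag he (Real.toNNReal_pos.2 hc0) hF (hh n),
      ae_norm_deriv_zigzag he (Real.toNNReal_pos.2 hc0) hG (hh n)] with y hFy hGy
    exact ⟨hFy.trans hC, hGy.trans hC⟩
  · have hXeq : X = fun p => F (p.2 + κ * p.1) + G (p.2 - κ * p.1) := funext fun p => hX p.1 p.2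
    rw [hXeq]
    have hFn := (tendstoUniformly_zigzag he hF hh hlim).comp fun p : ℝ × ℝ => p.2 + κ * p.1
    have hGn := (tendstoUniformly_zigzag he hG hh hlim).comp fun p : ℝ × ℝ => p.2 - κ * p.1
    exact hFn.add hGn
end

section
/- Let d ≥ 1 and Y, Z ∈ ℝ^d. Then the supremum, over all W ∈ ℝ^d such that (1 + |Y|²)(1 − |W|²) + (W·Y)² ≥ 0, of the quantity Z·W + √((1 + |Y|²)(1 − |W|²) + (W·Y)²), equals √(1 + |Y|² + |Z|² + (Y·Z)²). -/
open scoped RealInnerProductSpace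

/-!
With `c = 1 + |Y|²`, the radicand is `c - A(W, W)` for the positive semidefinite form
`A = c⟨·,·⟩ - ⟨Y,·⟩⟨Y,·⟩`. Since `A(Z + (Y·Z) Y, ·) = c⟨Z, ·⟩`, Cauchy–Schwarz for `A` gives
`c (Z·W)² ≤ (|Z|² + (Y·Z)²) A(W, W)`, and an AM–GM step bounds `Z·W + √(c - A(W, W))` by
`h = √(1 + |Y|² + |Z|² + (Y·Z)²)`. Equality holds at `W = (Z + (Y·Z) Y) / h`.
-/

theorem add_sqrt_sub_le_sqrt_add {B Q c r : ℝ} (hB : 0 ≤ B) (hc : 0 < c) (hQ : 0 ≤ Q)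
    (hQc : Q ≤ c) (h : c * r ^ 2 ≤ B * Q) : r + √(c - Q) ≤ √(B + c) := by
  set s := √(c - Q)
  have hs : s ^ 2 = c - Q := Real.sq_sqrt (by linarith)
  rcases le_total (r + s) 0 with hrs | hrs
  · exact hrs.trans (Real.sqrt_nonneg _)
  apply Real.le_sqrt_of_sq_le
  have amgm : 2 * c * r * s ≤ B * s ^ 2 + c * Q := by
    have : (2 * c * r * s) ^ 2 ≤ (B * s ^ 2 + c * Q) ^ 2 := by
      nlinarith [sq_nonneg (B * s ^ 2 - c * Q),
        mul_le_mul_of_nonneg_left h (by positivity : 0 ≤ 4 * c * s ^ 2)]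
    exact (abs_le_of_sq_le_sq' this (by positivity)).2
  nlinarith

namespace NambuGoto

variable {E : Type*} [NormedAddCommGroup E] [InnerProductSpace ℝ E]

noncomputable def form (Y : E) : LinearMap.BilinForm ℝ E :=
  (1 + ‖Y‖ ^ 2) • innerₗ E - (LinearMap.mul ℝ ℝ).compl₁₂ (innerₗ E Y) (innerₗ E Y)

@[simp]
theorem form_apply (Y u v : E) : form Y u v = (1 + ‖Y‖ ^ 2) * ⟪u, v⟫ - ⟪Y, u⟫ * ⟪Y, v⟫ := by
  simp [form]

theorem form_self_nonneg (Y u : E) : 0 ≤ form Y u u := by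
  have hCS : ⟪Y, u⟫ * ⟪Y, u⟫ ≤ ‖Y‖ ^ 2 * ‖u‖ ^ 2 := by
    simpa [real_inner_self_eq_norm_sq] using real_inner_mul_inner_self_le Y u
  rw [form_apply, real_inner_self_eq_norm_sq]
  nlinarith [sq_nonneg ‖u‖]

theorem lagrangian_radicand_eq (Y W : E) :
    (1 + ‖Y‖ ^ 2) * (1 - ‖W‖ ^ 2) + ⟪W, Y⟫ ^ 2 = (1 + ‖Y‖ ^ 2) - form Y W W := by
  rw [form_apply, real_inner_self_eq_norm_sq, real_inner_comm]
  ring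

theorem form_add_inner_smul_left (Y Z W : E) :
    form Y (Z + ⟪Y, Z⟫ • Y) W = (1 + ‖Y‖ ^ 2) * ⟪Z, W⟫ := by
  simp only [form_apply, inner_add_left, inner_add_right, real_inner_smul_left,
    real_inner_smul_right, real_inner_self_eq_norm_sq]
  ring

theorem form_add_inner_smul_self (Y Z : E) :
    form Y (Z + ⟪Y, Z⟫ • Y) (Z + ⟪Y, Z⟫ • Y) = (1 + ‖Y‖ ^ 2) * (‖Z‖ ^ 2 + ⟪Y, Z⟫ ^ 2) := by
  rw [form_add_inner_smul_left]
  simp only [inner_add_right, real_inner_smul_right, real_inner_self_eq_norm_sq,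
    real_inner_comm Z Y]
  ring

theorem form_isSymm (Y : E) : LinearMap.IsSymm (form Y) :=
  LinearMap.isSymm_def.2 fun u v => by simp [real_inner_comm, mul_comm]

theorem inner_sq_le_form (Y Z W : E) :
    (1 + ‖Y‖ ^ 2) * ⟪Z, W⟫ ^ 2 ≤ (‖Z‖ ^ 2 + ⟪Y, Z⟫ ^ 2) * form Y W W := by
  have hCS := (form Y).apply_sq_le_of_symm (form_self_nonneg Y) (form_isSymm Y)
    (Z + ⟪Y, Z⟫ • Y) W
  rw [form_add_inner_smul_left, form_add_inner_smul_self] at hCS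
  have hc : 0 < 1 + ‖Y‖ ^ 2 := by positivity
  nlinarith

theorem isGreatest_image (Y Z : E) :
    IsGreatest ((fun W : E => ⟪Z, W⟫ + √((1 + ‖Y‖ ^ 2) * (1 - ‖W‖ ^ 2) + ⟪W, Y⟫ ^ 2)) ''
      {W : E | 0 ≤ (1 + ‖Y‖ ^ 2) * (1 - ‖W‖ ^ 2) + ⟪W, Y⟫ ^ 2})
      (√(1 + ‖Y‖ ^ 2 + ‖Z‖ ^ 2 + ⟪Y, Z⟫ ^ 2)) := by
  simp_rw [lagrangian_radicand_eq]
  set c := 1 + ‖Y‖ ^ 2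
  set B := ‖Z‖ ^ 2 + ⟪Y, Z⟫ ^ 2
  have hc : 0 < c := by positivity
  have hB : 0 ≤ B := by positivity
  rw [show c + ‖Z‖ ^ 2 + ⟪Y, Z⟫ ^ 2 = B + c by ring]
  set h := √(B + c)
  have hh : 0 < h := Real.sqrt_pos.2 (by positivity)
  have hh2 : h ^ 2 = B + c := Real.sq_sqrt (by positivity)
  have hrad : c - form Y (h⁻¹ • (Z + ⟪Y, Z⟫ • Y)) (h⁻¹ • (Z + ⟪Y, Z⟫ • Y)) = (c / h) ^ 2 := by
    simp only [map_smul, LinearMap.smul_apply, smul_eq_mul, form_add_inner_smul_self]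
    field_simp
    linear_combination c * hh2
  have hval : ⟪Z, h⁻¹ • (Z + ⟪Y, Z⟫ • Y)⟫ = B / h := by
    rw [real_inner_smul_right, inner_add_right, real_inner_smul_right,
      real_inner_self_eq_norm_sq, real_inner_comm Y Z]
    field_simp
    ring
  refine ⟨⟨h⁻¹ • (Z + ⟪Y, Z⟫ • Y), ?_, ?_⟩, ?_⟩
  · rw [Set.mem_ofPred_eq, hrad]
    positivity
  · beta_reduce
    rw [hval, hrad, Real.sqrt_sq (by positivity)]
    field_simp
    linear_combination -hh2
  · rintro _ ⟨W, hW, rfl⟩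
    exact add_sqrt_sub_le_sqrt_add hB hc (form_self_nonneg Y W) (sub_nonneg.1 hW)
      (inner_sq_le_form Y Z W)

end NambuGoto

theorem statement10_general (d : ℕ) (Y Z : EuclideanSpace ℝ (Fin d)) :
    sSup ((fun W : EuclideanSpace ℝ (Fin d) =>
        ⟪Z, W⟫ + Real.sqrt ((1 + ‖Y‖ ^ 2) * (1 - ‖W‖ ^ 2) + ⟪W, Y⟫ ^ 2)) ''
      {W : EuclideanSpace ℝ (Fin d) |
        0 ≤ (1 + ‖Y‖ ^ 2) * (1 - ‖W‖ ^ 2) + ⟪W, Y⟫ ^ 2})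
    = Real.sqrt (1 + ‖Y‖ ^ 2 + ‖Z‖ ^ 2 + ⟪Y, Z⟫ ^ 2) :=
  (NambuGoto.isGreatest_image Y Z).csSup_eq

/-- The Hamiltonian `h(Y,Z) = √(1 + |Y|² + |Z|² + (Y·Z)²)` is the partial Legendre
transform in `W` of the Nambu–Goto Lagrangian density
`L(Y,W) = -√((1 + |Y|²)(1 - |W|²) + (W·Y)²)`: the supremum of
`Z·W - L(Y,W)` over all admissible `W` equals `h(Y,Z)`. -/
theorem statement10 (d : ℕ) (hd : 1 ≤ d) (Y Z : EuclideanSpace ℝ (Fin d)) :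
    sSup ((fun W : EuclideanSpace ℝ (Fin d) =>
        ⟪Z, W⟫ + Real.sqrt ((1 + ‖Y‖ ^ 2) * (1 - ‖W‖ ^ 2) + ⟪W, Y⟫ ^ 2)) ''
      {W : EuclideanSpace ℝ (Fin d) |
        0 ≤ (1 + ‖Y‖ ^ 2) * (1 - ‖W‖ ^ 2) + ⟪W, Y⟫ ^ 2})
    = Real.sqrt (1 + ‖Y‖ ^ 2 + ‖Z‖ ^ 2 + ⟪Y, Z⟫ ^ 2) :=
  statement10_general d Y Z
end

section
/- Let d ≥ 1, α ∈ ℝ and 0 < δ < 1. In ℝ × ℝ × ℝ^d × ℝ^d with points U = (τ, v, η, ζ), consider the set M_{α,δ} = {U : δ ≤ τ + (v − α) ≤ 1/δ, δ ≤ τ − (v − α) ≤ 1/δ, (v + τ)² + |η − ζ|² = 1, (v − τ)² + |η + ζ|² = 1}. Then the closed convex hull of M_{α,δ} is exactly the set {U : δ ≤ τ + (v − α) ≤ 1/δ, δ ≤ τ − (v − α) ≤ 1/δ, (v + τ)² + |η − ζ|² ≤ 1, (v − τ)² + |η + ζ|² ≤ 1}. -/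
/-!
In the coordinates `x = η - ζ`, `y = η + ζ` the two constraints decouple into
`|x|² = 1 - (v + τ)²` and `|y|² = 1 - (v - τ)²`, while the slab only involves `(τ, v)`.
For fixed `(τ, v)` the relaxed constraints say that `x` and `y` lie in closed balls, and in a
nontrivial normed space a closed ball is the convex hull of its sphere; so every point of the
relaxed set is a convex combination of points of `M_{α,δ}` with the same `(τ, v)`. Conversely,
the relaxed set is closed and convex because `(a, x) ↦ a² + |x|²` is a convex function.
-/

open Set Metric

section NormSq

variable {E : Type*} [NormedAddCommGroup E] [NormedSpace ℝ E]

lemma convexOn_sq_add_norm_sq : ConvexOn ℝ univ fun p : ℝ × E => p.1 ^ 2 + ‖p.2‖ ^ 2 := by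
  have hsq : ConvexOn ℝ univ fun p : ℝ × E => p.1 ^ 2 :=
    (Even.convexOn_pow (𝕜 := ℝ) even_two).comp_linearMap (LinearMap.fst ℝ ℝ E)
  have hnorm_sq : ConvexOn ℝ univ fun p : ℝ × E => ‖p.2‖ ^ 2 :=
    (convexOn_univ_norm.pow (fun _ _ => norm_nonneg _) 2).comp_linearMap (LinearMap.snd ℝ ℝ E)
  exact hsq.add hnorm_sq

lemma mem_convexHull_setOf_norm_sq_eq [Nontrivial E] {x : E} {c : ℝ} (hx : ‖x‖ ^ 2 ≤ c) :
    x ∈ convexHull ℝ {y : E | ‖y‖ ^ 2 = c} := by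
  have hc : 0 ≤ c := (sq_nonneg _).trans hx
  have hsphere : {y : E | ‖y‖ ^ 2 = c} = sphere 0 √c := by
    ext y
    rw [mem_sphere_zero_iff_norm, eq_comm, Real.sqrt_eq_iff_eq_sq hc (norm_nonneg y), eq_comm]
    rfl
  rw [hsphere, convexHull_sphere_eq_closedBall 0 (Real.sqrt_nonneg c), mem_closedBall_zero_iff]
  exact Real.le_sqrt_of_sq_le hx

end NormSq

namespace RelativisticConstraint

variable (E : Type*) [NormedAddCommGroup E]

/-- The constraint manifold `M`, in the form `(v ± τ)² + |η ∓ ζ|² = 1`, with `U = (τ, v, η, ζ)`. -/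
def manifold : Set (ℝ × ℝ × E × E) :=
  {U | (U.2.1 + U.1) ^ 2 + ‖U.2.2.1 - U.2.2.2‖ ^ 2 = 1 ∧
    (U.2.1 - U.1) ^ 2 + ‖U.2.2.1 + U.2.2.2‖ ^ 2 = 1}

def body : Set (ℝ × ℝ × E × E) :=
  {U | (U.2.1 + U.1) ^ 2 + ‖U.2.2.1 - U.2.2.2‖ ^ 2 ≤ 1 ∧
    (U.2.1 - U.1) ^ 2 + ‖U.2.2.1 + U.2.2.2‖ ^ 2 ≤ 1}

def cylinder (K : Set (ℝ × ℝ)) : Set (ℝ × ℝ × E × E) :=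
  {U | (U.1, U.2.1) ∈ K}

variable {E}

lemma manifold_subset_body : manifold E ⊆ body E :=
  fun _ h => ⟨h.1.le, h.2.le⟩

lemma isClosed_body : IsClosed (body E) := by
  rw [body, ofPred_and]
  exact (isClosed_le (by fun_prop) continuous_const).inter
    (isClosed_le (by fun_prop) continuous_const)

lemma isClosed_cylinder {K : Set (ℝ × ℝ)} (hK : IsClosed K) : IsClosed (cylinder E K) :=
  hK.preimage (by fun_prop)

variable [NormedSpace ℝ E]

lemma convex_body : Convex ℝ (body E) := by
  have hdisk : Convex ℝ {p : ℝ × E | p.1 ^ 2 + ‖p.2‖ ^ 2 ≤ 1} := by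
    simpa using convexOn_sq_add_norm_sq.convex_le 1
  have hplus : IsLinearMap ℝ fun U : ℝ × ℝ × E × E => (U.2.1 + U.1, U.2.2.1 - U.2.2.2) := by
    constructor <;> intros <;> ext <;>
      simp only [Prod.fst_add, Prod.snd_add, Prod.smul_fst, Prod.smul_snd] <;> module
  have hminus : IsLinearMap ℝ fun U : ℝ × ℝ × E × E => (U.2.1 - U.1, U.2.2.1 + U.2.2.2) := by
    constructor <;> intros <;> ext <;>
      simp only [Prod.fst_add, Prod.snd_add, Prod.smul_fst, Prod.smul_snd] <;> module
  exact (hdisk.is_linear_preimage hplus).inter (hdisk.is_linear_preimage hminus)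

lemma convex_cylinder {K : Set (ℝ × ℝ)} (hK : Convex ℝ K) : Convex ℝ (cylinder E K) :=
  hK.is_linear_preimage ⟨fun _ _ => rfl, fun _ _ => rfl⟩

lemma cylinder_inter_body_subset_convexHull [Nontrivial E] (K : Set (ℝ × ℝ)) :
    cylinder E K ∩ body E ⊆ convexHull ℝ (cylinder E K ∩ manifold E) := by
  rintro ⟨τ, v, η, ζ⟩ ⟨hK, hplus, hminus⟩
  -- `g` undoes the change of coordinates `(η, ζ) ↦ (η - ζ, η + ζ)`.
  let g : ℝ × ℝ × E × E → ℝ × ℝ × E × E := fun W =>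
    (W.1, W.2.1, (2⁻¹ : ℝ) • (W.2.2.1 + W.2.2.2), (2⁻¹ : ℝ) • (W.2.2.2 - W.2.2.1))
  have hg : IsLinearMap ℝ g := by
    constructor <;> intros <;> ext <;>
      simp only [g, Prod.fst_add, Prod.snd_add, Prod.smul_fst, Prod.smul_snd] <;> module
  set A := {x : E | ‖x‖ ^ 2 = 1 - (v + τ) ^ 2}
  set B := {y : E | ‖y‖ ^ 2 = 1 - (v - τ) ^ 2}
  have hmem : (τ, v, η - ζ, η + ζ) ∈ convexHull ℝ ({τ} ×ˢ {v} ×ˢ A ×ˢ B) := by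
    simp only [convexHull_prod, convexHull_singleton]
    exact ⟨rfl, rfl, mem_convexHull_setOf_norm_sq_eq (by linarith),
      mem_convexHull_setOf_norm_sq_eq (by linarith)⟩
  have hU : g (τ, v, η - ζ, η + ζ) = (τ, v, η, ζ) := by
    simp only [g, Prod.mk.injEq, true_and]
    constructor <;> module
  rw [← hU]
  refine convexHull_mono ?_ (hg.image_convexHull _ ▸ mem_image_of_mem g hmem)
  rintro _ ⟨⟨τ', v', x, y⟩, ⟨rfl, rfl, hx, hy⟩, rfl⟩
  have hdiff : (2⁻¹ : ℝ) • (x + y) - (2⁻¹ : ℝ) • (y - x) = x := by module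
  have hsum : (2⁻¹ : ℝ) • (x + y) + (2⁻¹ : ℝ) • (y - x) = y := by module
  refine ⟨hK, ?_, ?_⟩
  · change (v' + τ') ^ 2 + ‖(2⁻¹ : ℝ) • (x + y) - (2⁻¹ : ℝ) • (y - x)‖ ^ 2 = 1
    rw [hdiff, mem_ofPred_eq.mp hx]
    ring
  · change (v' - τ') ^ 2 + ‖(2⁻¹ : ℝ) • (x + y) + (2⁻¹ : ℝ) • (y - x)‖ ^ 2 = 1
    rw [hsum, mem_ofPred_eq.mp hy]
    ring

theorem closure_convexHull_cylinder_inter_manifold [Nontrivial E] {K : Set (ℝ × ℝ)}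
    (hKconv : Convex ℝ K) (hKclosed : IsClosed K) :
    closure (convexHull ℝ (cylinder E K ∩ manifold E)) = cylinder E K ∩ body E :=
  subset_antisymm
    (closure_minimal
      (convexHull_min (inter_subset_inter_right _ manifold_subset_body)
        ((convex_cylinder hKconv).inter convex_body))
      ((isClosed_cylinder hKclosed).inter isClosed_body))
    ((cylinder_inter_body_subset_convexHull K).trans subset_closure)

def slab (α δ : ℝ) : Set (ℝ × ℝ) :=
  {p | δ ≤ p.1 + (p.2 - α) ∧ p.1 + (p.2 - α) ≤ 1 / δ ∧
    δ ≤ p.1 - (p.2 - α) ∧ p.1 - (p.2 - α) ≤ 1 / δ}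

lemma convex_slab (α δ : ℝ) : Convex ℝ (slab α δ) := by
  rintro ⟨τ₁, v₁⟩ ⟨h₁, h₂, h₃, h₄⟩ ⟨τ₂, v₂⟩ ⟨h₅, h₆, h₇, h₈⟩ a b ha hb hab
  simp only [slab, Prod.smul_mk, Prod.mk_add_mk, smul_eq_mul, mem_ofPred_eq]
  obtain rfl : b = 1 - a := by linarith
  refine ⟨?_, ?_, ?_, ?_⟩ <;> nlinarith

lemma isClosed_slab (α δ : ℝ) : IsClosed (slab α δ) := by
  simp only [slab, ofPred_and]
  exact (isClosed_le continuous_const (by fun_prop)).inter <|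
    (isClosed_le (by fun_prop) continuous_const).inter <|
    (isClosed_le continuous_const (by fun_prop)).inter (isClosed_le (by fun_prop) continuous_const)

end RelativisticConstraint

theorem statement17_general (d : ℕ) (hd : 1 ≤ d) (α : ℝ) (δ : ℝ) :
    closure (convexHull ℝ
      {U : ℝ × ℝ × EuclideanSpace ℝ (Fin d) × EuclideanSpace ℝ (Fin d) |
        δ ≤ U.1 + (U.2.1 - α) ∧ U.1 + (U.2.1 - α) ≤ 1 / δ ∧
        δ ≤ U.1 - (U.2.1 - α) ∧ U.1 - (U.2.1 - α) ≤ 1 / δ ∧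
        (U.2.1 + U.1) ^ 2 + ‖U.2.2.1 - U.2.2.2‖ ^ 2 = 1 ∧
        (U.2.1 - U.1) ^ 2 + ‖U.2.2.1 + U.2.2.2‖ ^ 2 = 1})
    = {U : ℝ × ℝ × EuclideanSpace ℝ (Fin d) × EuclideanSpace ℝ (Fin d) |
        δ ≤ U.1 + (U.2.1 - α) ∧ U.1 + (U.2.1 - α) ≤ 1 / δ ∧
        δ ≤ U.1 - (U.2.1 - α) ∧ U.1 - (U.2.1 - α) ≤ 1 / δ ∧
        (U.2.1 + U.1) ^ 2 + ‖U.2.2.1 - U.2.2.2‖ ^ 2 ≤ 1 ∧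
        (U.2.1 - U.1) ^ 2 + ‖U.2.2.1 + U.2.2.2‖ ^ 2 ≤ 1} := by
  have : Nonempty (Fin d) := ⟨⟨0, hd⟩⟩
  have hmain := RelativisticConstraint.closure_convexHull_cylinder_inter_manifold
    (E := EuclideanSpace ℝ (Fin d)) (RelativisticConstraint.convex_slab α δ)
    (RelativisticConstraint.isClosed_slab α δ)
  simpa only [RelativisticConstraint.cylinder, RelativisticConstraint.slab,
    RelativisticConstraint.manifold, RelativisticConstraint.body, ← ofPred_and, mem_ofPred_eq,
    and_assoc] using hmain

/-- The closed convex hull of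
`M_{α,δ} = {δ ≤ τ ± (v - α) ≤ 1/δ, (v + τ)² + |η - ζ|² = 1, (v - τ)² + |η + ζ|² = 1}`
is exactly the set where the two equalities are relaxed to inequalities `≤ 1`. -/
theorem statement17 (d : ℕ) (hd : 1 ≤ d) (α : ℝ) (δ : ℝ) (hδ0 : 0 < δ) (hδ1 : δ < 1) :
    closure (convexHull ℝ
      {U : ℝ × ℝ × EuclideanSpace ℝ (Fin d) × EuclideanSpace ℝ (Fin d) |
        δ ≤ U.1 + (U.2.1 - α) ∧ U.1 + (U.2.1 - α) ≤ 1 / δ ∧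
        δ ≤ U.1 - (U.2.1 - α) ∧ U.1 - (U.2.1 - α) ≤ 1 / δ ∧
        (U.2.1 + U.1) ^ 2 + ‖U.2.2.1 - U.2.2.2‖ ^ 2 = 1 ∧
        (U.2.1 - U.1) ^ 2 + ‖U.2.2.1 + U.2.2.2‖ ^ 2 = 1})
    = {U : ℝ × ℝ × EuclideanSpace ℝ (Fin d) × EuclideanSpace ℝ (Fin d) |
        δ ≤ U.1 + (U.2.1 - α) ∧ U.1 + (U.2.1 - α) ≤ 1 / δ ∧
        δ ≤ U.1 - (U.2.1 - α) ∧ U.1 - (U.2.1 - α) ≤ 1 / δ ∧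
        (U.2.1 + U.1) ^ 2 + ‖U.2.2.1 - U.2.2.2‖ ^ 2 ≤ 1 ∧
        (U.2.1 - U.1) ^ 2 + ‖U.2.2.1 + U.2.2.2‖ ^ 2 ≤ 1} :=
  statement17_general d hd α δ
end
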